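/- Fix L > 0 and a continuous function W : [0,L] → ℝ with sup norm ‖W‖, and define s(λ) = sin(√λ L)/√λ + ∑_{k=1}^∞ S_k(λ) for λ > 0. Then s is three times differentiable on (1,∞), and there exists a constant C (depending only on L and ‖W‖) such that for all λ ≥ 1: |s''(λ) + L² sin(√λ L)/(4λ^{3/2})| ≤ C λ^{−2} and |s'''(λ) + L³ cos(√λ L)/(8λ²)| ≤ C λ^{−5/2}. -/

import Mathlib

open MeasureTheory Real Set

/-- The simplex `Δ_k = {0 ≤ t₁ ≤ ⋯ ≤ t_k ≤ L}` in `ℝ^k`. -/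
def simplexSet (L : ℝ) (k : ℕ) : Set (Fin k → ℝ) :=
  {t | Monotone t ∧ ∀ i, t i ∈ Set.Icc (0:ℝ) L}

/-- The extended sequence `(0, t₁, …, t_k, L)` of length `k+2`. -/
def extSeq (L : ℝ) {k : ℕ} (t : Fin k → ℝ) : Fin (k+2) → ℝ :=
  Fin.snoc (Fin.cons 0 t) L

/-- `S_k(λ) = ∫_{Δ_k} λ^{−(k+1)/2} ∏_{j=0}^{k} sin(√λ(t_{j+1}−t_j)) ∏_{j=1}^{k} W(t_j) dt`. -/
noncomputable def Sfun (L : ℝ) (W : ℝ → ℝ) (k : ℕ) (lam : ℝ) : ℝ :=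
  ∫ t in simplexSet L k,
    lam ^ (-((k:ℝ)+1)/2) *
      (∏ j : Fin (k+1),
        Real.sin (Real.sqrt lam * (extSeq L t j.succ - extSeq L t j.castSucc))) *
      ∏ j : Fin k, W (t j)

/-- `s(λ) = sin(√λ L)/√λ + ∑_{k=1}^∞ S_k(λ)`. -/
noncomputable def sfun (L : ℝ) (W : ℝ → ℝ) (lam : ℝ) : ℝ :=
  Real.sin (Real.sqrt lam * L) / Real.sqrt lam + ∑' k : ℕ, Sfun L W (k+1) lam

/-!
Attaching one factor `λ^{-1/2}` to each sine, `S_k(λ)` integrates over `Δ_k` the product of `k + 1`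
copies of the sine kernel `g(u, λ) = sin (√λ u) / √λ`, evaluated at the gaps `t_{j+1} - t_j`, times
`∏ W(t_j)`. Every `λ`-derivative of `g` gains a factor `λ^{-1/2}`, so by Leibniz' rule the `m`-th
derivative of the integrand of `S_k` is `O((C λ^{-1/2})^{k+1} ((k+1) λ^{-1/2})^m)` for `λ ≥ 1/4`.
As `vol Δ_k ≤ L^k / k!`, the differentiated series `∑_{k ≥ 1} S_k^{(m)}` converges uniformly on
`(1/4, ∞)` and is `O(λ^{-(m+2)/2})`. Hence `s^{(m)}(λ) = ∂_λ^m g(L, λ) + O(λ^{-(m+2)/2})`, and the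
stated leading terms are the top-order terms of `∂_λ² g(L, λ)` and `∂_λ³ g(L, λ)`.
-/

open Filter Function Topology
open scoped Nat ContDiff ENNReal

section IteratedDerivatives

variable {𝕜 F : Type*} [NontriviallyNormedField 𝕜] [NormedAddCommGroup F] [NormedSpace 𝕜 F]

theorem eqOn_iterate_deriv_of_hasDerivAt {f : 𝕜 → F} {g : ℕ → 𝕜 → F} {s : Set 𝕜} (hs : IsOpen s)
    {N : ℕ} (hf : EqOn f (g 0) s) (hg : ∀ m < N, ∀ x ∈ s, HasDerivAt (g m) (g (m + 1) x) x) :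
    ∀ m ≤ N, EqOn (deriv^[m] f) (g m) s
  | 0, _ => hf
  | m + 1, hm => fun x hx => by
    rw [Function.iterate_succ_apply']
    exact ((hg m hm x hx).congr_of_eventuallyEq (eventuallyEq_of_mem (hs.mem_nhds hx)
      (eqOn_iterate_deriv_of_hasDerivAt hs hf hg m (Nat.le_of_lt hm)))).deriv

theorem hasDerivAt_iterate_deriv_of_hasDerivAt {f : 𝕜 → F} {g : ℕ → 𝕜 → F} {s : Set 𝕜}
    (hs : IsOpen s) {N : ℕ} (hf : EqOn f (g 0) s)
    (hg : ∀ m < N, ∀ x ∈ s, HasDerivAt (g m) (g (m + 1) x) x) {m : ℕ} (hm : m < N) {x : 𝕜}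
    (hx : x ∈ s) : HasDerivAt (deriv^[m] f) (g (m + 1) x) x :=
  (hg m hm x hx).congr_of_eventuallyEq
    (eventuallyEq_of_mem (hs.mem_nhds hx) (eqOn_iterate_deriv_of_hasDerivAt hs hf hg m hm.le))

theorem ContDiffOn.hasDerivAt_iteratedDeriv {f : 𝕜 → F} {s : Set 𝕜} (hf : ContDiffOn 𝕜 ∞ f s)
    (hs : IsOpen s) (m : ℕ) {x : 𝕜} (hx : x ∈ s) :
    HasDerivAt (iteratedDeriv m f) (iteratedDeriv (m + 1) f x) x := by
  have hdiff := (hf.differentiableOn_iteratedDerivWithin (m := m)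
    (by exact_mod_cast WithTop.coe_lt_top _) hs.uniqueDiffOn).differentiableAt (hs.mem_nhds hx)
  rw [iteratedDeriv_succ]
  exact (hdiff.congr_of_eventuallyEq (eventuallyEq_of_mem (hs.mem_nhds hx)
    (iteratedDerivWithin_of_isOpen hs)).symm).hasDerivAt

theorem norm_iteratedFDerivWithin_eq_norm_iteratedDeriv_of_isOpen {f : 𝕜 → F} {s : Set 𝕜}
    (hs : IsOpen s) {x : 𝕜} (hx : x ∈ s) (n : ℕ) :
    ‖iteratedFDerivWithin 𝕜 n f s x‖ = ‖iteratedDeriv n f x‖ := by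
  rw [iteratedFDerivWithin_of_isOpen n hs hx, norm_iteratedFDeriv_eq_norm_iteratedDeriv]

end IteratedDerivatives

section Leibniz

variable {𝕜 E A ι : Type*} [NontriviallyNormedField 𝕜] [NormedAddCommGroup E] [NormedSpace 𝕜 E]
  [NormedCommRing A] [NormedAlgebra 𝕜 A] [NormOneClass A]

theorem norm_iteratedFDerivWithin_prod_le_of_le {s : Set E} (hs : UniqueDiffOn 𝕜 s) {x : E}
    (hx : x ∈ s) {N : ℕ} {u : Finset ι} {f : ι → E → A} (hf : ∀ j ∈ u, ContDiffOn 𝕜 N (f j) s)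
    {a r : ℝ} (hfx : ∀ j ∈ u, ∀ i ≤ N, ‖iteratedFDerivWithin 𝕜 i (f j) s x‖ ≤ a * r ^ (i + 1))
    {m : ℕ} (hm : m ≤ N) :
    ‖iteratedFDerivWithin 𝕜 m (fun y => ∏ j ∈ u, f j y) s x‖ ≤
      (a * r) ^ u.card * (u.card * r) ^ m := by
  classical
  induction u using Finset.cons_induction generalizing m with
  | empty =>
    rcases m with _ | m
    · simp
    · simp [iteratedFDerivWithin_const_of_ne (Nat.succ_ne_zero m)]
  | cons b u hb ih =>
    have hfu : ∀ j ∈ u, ContDiffOn 𝕜 N (f j) s := fun j hj => hf j (Finset.mem_cons_of_mem hj)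
    simp only [Finset.prod_cons, Finset.card_cons]
    refine (norm_iteratedFDerivWithin_mul_le (hf b (Finset.mem_cons_self b u))
      (contDiffOn_prod hfu) hs hx (by exact_mod_cast hm)).trans ?_
    calc ∑ i ∈ Finset.range (m + 1), (m.choose i : ℝ) * ‖iteratedFDerivWithin 𝕜 i (f b) s x‖ *
          ‖iteratedFDerivWithin 𝕜 (m - i) (fun y => ∏ j ∈ u, f j y) s x‖
        ≤ ∑ i ∈ Finset.range (m + 1), (m.choose i : ℝ) * (a * r ^ (i + 1)) *
          ((a * r) ^ u.card * (u.card * r) ^ (m - i)) := by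
          refine Finset.sum_le_sum fun i hi => ?_
          have him : i ≤ m := Nat.lt_succ_iff.mp (Finset.mem_range.mp hi)
          have h1 := hfx b (Finset.mem_cons_self b u) i (him.trans hm)
          exact mul_le_mul (mul_le_mul_of_nonneg_left h1 (Nat.cast_nonneg _))
            (ih hfu (fun j hj => hfx j (Finset.mem_cons_of_mem hj)) ((m.sub_le i).trans hm))
            (norm_nonneg _) (mul_nonneg (Nat.cast_nonneg _) ((norm_nonneg _).trans h1))
      _ = (a * r) ^ (u.card + 1) * r ^ m *
          ∑ i ∈ Finset.range (m + 1), 1 ^ i * (u.card : ℝ) ^ (m - i) * m.choose i := by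
          rw [Finset.mul_sum]
          refine Finset.sum_congr rfl fun i hi => ?_
          have him : i ≤ m := Nat.lt_succ_iff.mp (Finset.mem_range.mp hi)
          have hr : r ^ (i + 1) * r ^ (m - i) = r * r ^ m := by
            rw [← pow_add, ← pow_succ', Nat.add_right_comm, Nat.add_sub_cancel' him]
          rw [mul_pow (u.card : ℝ), one_pow]
          linear_combination (m.choose i : ℝ) * a * (a * r) ^ u.card * (u.card : ℝ) ^ (m - i) * hr
      _ = (a * r) ^ (u.card + 1) * (((u.card + 1 : ℕ) : ℝ) * r) ^ m := by
          rw [← add_pow, Nat.cast_succ, mul_pow _ r m, add_comm (1 : ℝ)]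
          ring

end Leibniz

theorem aestronglyMeasurable_deriv_apply {α E : Type*} [MeasurableSpace α] {μ : Measure α}
    [NormedAddCommGroup E] [NormedSpace ℝ E] {F : α → ℝ → E} {s : Set ℝ} (hs : IsOpen s)
    {x : ℝ} (hx : x ∈ s) (hF : ∀ y ∈ s, AEStronglyMeasurable (fun a => F a y) μ)
    (hdiff : ∀ᵐ a ∂μ, DifferentiableAt ℝ (F a) x) :
    AEStronglyMeasurable (fun a => deriv (F a) x) μ := by
  obtain ⟨ε, hε, hball⟩ := Metric.isOpen_iff.mp hs x hx
  set δ : ℕ → ℝ := fun n => ε / 2 * (1 / ((n : ℝ) + 1))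
  have hδ_pos (n : ℕ) : 0 < δ n := by positivity
  have hδ_mem (n : ℕ) : x + δ n ∈ s := by
    refine hball ?_
    have : δ n ≤ ε / 2 := mul_le_of_le_one_right (by positivity)
      ((div_le_one (by positivity)).mpr (by linarith [(n.cast_nonneg : (0 : ℝ) ≤ n)]))
    rw [Metric.mem_ball, dist_eq_norm, add_sub_cancel_left, norm_of_nonneg (hδ_pos n).le]
    linarith
  have hδ_lim : Tendsto δ atTop (𝓝[≠] 0) :=
    tendsto_nhdsWithin_of_tendsto_nhds_of_eventually_within _
      (by simpa [δ] using tendsto_one_div_add_atTop_nhds_zero_nat.const_mul (ε / 2))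
      (Eventually.of_forall fun n => (hδ_pos n).ne')
  refine aestronglyMeasurable_of_tendsto_ae atTop
    (f := fun n a => (δ n)⁻¹ • (F a (x + δ n) - F a x))
    (fun n => ((hF _ (hδ_mem n)).sub (hF x hx)).const_smul _) ?_
  filter_upwards [hdiff] with a ha
  exact (hasDerivAt_iff_tendsto_slope_zero.mp ha.hasDerivAt).comp hδ_lim

section RealPowers

theorem rpow_neg_div_two_eq_inv_sqrt_pow {l : ℝ} (hl : 0 ≤ l) (n : ℕ) :
    l ^ (-(n : ℝ) / 2) = (√l)⁻¹ ^ n := by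
  rw [sqrt_eq_rpow, ← rpow_neg hl, ← rpow_mul_natCast hl]
  congr 1
  ring

theorem inv_sqrt_le_two {l : ℝ} (hl : 1 / 4 ≤ l) : (√l)⁻¹ ≤ 2 := by
  rw [inv_le_comm₀ (sqrt_pos.mpr (by linarith)) two_pos, le_sqrt (by norm_num) (by linarith)]
  linarith

theorem abs_mul_mul_pow_le {a c s r : ℝ} (hc : |c| ≤ a) (hs : |s| ≤ 1) (hr : 0 ≤ r) (n : ℕ) :
    |c * (s * r ^ n)| ≤ a * r ^ n := by
  rw [abs_mul, abs_mul, abs_of_nonneg (pow_nonneg hr _), ← mul_assoc]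
  exact mul_le_mul_of_nonneg_right ((mul_le_of_le_one_right (abs_nonneg c) hs).trans hc)
    (pow_nonneg hr n)

theorem add_two_pow_mul_pow_le {k m : ℕ} (hm : m ≤ 3) {r : ℝ} (hr : 0 ≤ r) (hr2 : r ≤ 2) :
    ((k : ℝ) + 2) ^ m * r ^ k ≤ 16 ^ (k + 1) := by
  have hk : (k : ℝ) + 2 ≤ 2 ^ (k + 1) := by exact_mod_cast Nat.lt_two_pow_self (n := k + 1)
  calc ((k : ℝ) + 2) ^ m * r ^ k ≤ ((2 : ℝ) ^ (k + 1)) ^ 3 * 2 ^ (k + 1) := by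
        gcongr
        · exact (pow_le_pow_right₀ (by linarith) hm).trans (by gcongr)
        · exact (pow_le_pow_left₀ hr hr2 k).trans (pow_le_pow_right₀ one_le_two k.le_succ)
    _ = 16 ^ (k + 1) := by rw [← pow_succ, ← pow_mul, mul_comm, pow_mul]; norm_num

end RealPowers

section Simplex

theorem simplexSet_eq (L : ℝ) (k : ℕ) :
    simplexSet L k = {t | Monotone t} ∩ univ.pi fun _ => Icc 0 L := by
  ext t
  simp only [simplexSet, mem_ofPred_eq, mem_inter_iff, mem_univ_pi]

theorem measurableSet_simplexSet (L : ℝ) (k : ℕ) : MeasurableSet (simplexSet L k) := by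
  rw [simplexSet_eq]
  exact (isClosed_monotone.inter (isClosed_set_pi fun _ _ => isClosed_Icc)).measurableSet

theorem simplexSet_subset_pi (L : ℝ) (k : ℕ) : simplexSet L k ⊆ univ.pi fun _ => Icc 0 L :=
  fun _ ht => mem_univ_pi.mpr ht.2

theorem volume_simplexSet_lt_top (L : ℝ) (k : ℕ) : volume (simplexSet L k) < ⊤ :=
  (measure_mono (simplexSet_subset_pi L k)).trans_lt
    (isCompact_univ_pi fun _ => isCompact_Icc).measure_lt_top

instance (L : ℝ) (k : ℕ) : IsFiniteMeasure (volume.restrict (simplexSet L k)) :=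
  isFiniteMeasure_restrict.mpr (volume_simplexSet_lt_top L k).ne

theorem volume_setOf_not_injective (k : ℕ) :
    volume {t : Fin k → ℝ | ¬ Injective t} = 0 := by
  have hsub : {t : Fin k → ℝ | ¬ Injective t} ⊆
      ⋃ (i : Fin k) (j : Fin k) (_ : i ≠ j),
        (LinearMap.ker ((LinearMap.proj i : (Fin k → ℝ) →ₗ[ℝ] ℝ) - LinearMap.proj j) : Set _) := by
    intro t ht
    simp only [Injective, not_forall] at ht
    obtain ⟨i, j, hij, hne⟩ := ht
    simp only [mem_iUnion]
    exact ⟨i, j, hne, by simp [hij]⟩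
  refine measure_mono_null hsub (measure_iUnion_null fun i => measure_iUnion_null fun j =>
    measure_iUnion_null fun hij => Measure.addHaar_submodule _ _ fun htop => ?_)
  have h := htop ▸ Submodule.mem_top (x := (Pi.single i 1 : Fin k → ℝ))
  simp [Pi.single_eq_of_ne hij.symm] at h

theorem eq_of_monotone_comp_perm {α : Type*} [LinearOrder α] {k : ℕ} {t : Fin k → α}
    (ht : Injective t) {σ τ : Equiv.Perm (Fin k)} (hσ : Monotone (t ∘ σ))
    (hτ : Monotone (t ∘ τ)) : σ = τ := by
  have hsort {ρ : Equiv.Perm (Fin k)} (hρ : Monotone (t ∘ ρ)) : ρ = Tuple.sort t :=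
    Tuple.eq_sort_iff.mpr ⟨hρ, fun _ _ hij h => absurd (ρ.injective (ht h)) hij.ne⟩
  rw [hsort hσ, hsort hτ]

/-- The `k!` coordinate permutations of the simplex tile the cube up to a null set. -/
theorem factorial_mul_volume_simplexSet_le (L : ℝ) (k : ℕ) :
    (k ! : ℝ≥0∞) * volume (simplexSet L k) ≤ volume (univ.pi fun _ : Fin k => Icc (0 : ℝ) L) := by
  set B : Equiv.Perm (Fin k) → Set (Fin k → ℝ) := fun σ => (fun t => t ∘ σ) ⁻¹' simplexSet L k
  have hmp (σ : Equiv.Perm (Fin k)) : MeasurePreserving (fun t : Fin k → ℝ => t ∘ σ) :=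
    volume_preserving_arrowCongr' σ.symm (MeasurableEquiv.refl ℝ) (MeasurePreserving.id _)
  have hB (σ) : volume (B σ) = volume (simplexSet L k) :=
    (hmp σ).measure_preimage (measurableSet_simplexSet L k).nullMeasurableSet
  have hdisj : Pairwise (AEDisjoint volume on B) := fun σ τ hστ =>
    measure_mono_null (t := {t | ¬ Injective t})
      (fun t ht hinj => hστ (eq_of_monotone_comp_perm hinj ht.1.1 ht.2.1))
      (volume_setOf_not_injective k)
  have hcover : ⋃ σ, B σ ⊆ univ.pi fun _ => Icc 0 L := by
    refine iUnion_subset fun σ t ht => mem_univ_pi.mpr fun i => ?_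
    simpa using ht.2 (σ.symm i)
  calc (k ! : ℝ≥0∞) * volume (simplexSet L k) = ∑ σ, volume (B σ) := by
        simp [hB, Finset.card_univ, Fintype.card_perm]
    _ = volume (⋃ σ, B σ) := by
        rw [measure_iUnion₀ hdisj fun σ => ((measurableSet_simplexSet L k).preimage
          (hmp σ).measurable).nullMeasurableSet, tsum_fintype]
    _ ≤ _ := measure_mono hcover

theorem volume_real_simplexSet_le {L : ℝ} (hL : 0 ≤ L) (k : ℕ) :
    volume.real (simplexSet L k) ≤ L ^ k / k ! := by
  have h := factorial_mul_volume_simplexSet_le L k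
  rw [volume_pi_pi, Real.volume_Icc, sub_zero, Finset.prod_const, Finset.card_univ,
    Fintype.card_fin, ← ENNReal.ofReal_pow hL] at h
  have h' := ENNReal.toReal_le_of_le_ofReal (pow_nonneg hL k) h
  rw [ENNReal.toReal_mul, ENNReal.toReal_natCast] at h'
  rw [le_div_iff₀ (by positivity), measureReal_def, mul_comm]
  exact h'

end Simplex

section SineKernel

/-- `sineKernelDeriv m u λ` is the `m`-th derivative in `λ` of `sin (√λ u) / √λ` for `m ≤ 3`
(and `0` for `m ≥ 4`, orders that are never needed). -/
noncomputable def sineKernelDeriv : ℕ → ℝ → ℝ → ℝ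
  | 0, u, l => sin (√l * u) * (√l)⁻¹
  | 1, u, l => u / 2 * (cos (√l * u) * (√l)⁻¹ ^ 2) - 1 / 2 * (sin (√l * u) * (√l)⁻¹ ^ 3)
  | 2, u, l => -(u ^ 2 / 4) * (sin (√l * u) * (√l)⁻¹ ^ 3)
      - 3 * u / 4 * (cos (√l * u) * (√l)⁻¹ ^ 4) + 3 / 4 * (sin (√l * u) * (√l)⁻¹ ^ 5)
  | 3, u, l => -(u ^ 3 / 8) * (cos (√l * u) * (√l)⁻¹ ^ 4)
      + 3 * u ^ 2 / 4 * (sin (√l * u) * (√l)⁻¹ ^ 5)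
      + 15 * u / 8 * (cos (√l * u) * (√l)⁻¹ ^ 6) - 15 / 8 * (sin (√l * u) * (√l)⁻¹ ^ 7)
  | _ + 4, _, _ => 0

theorem hasDerivAt_inv_sqrt_pow (n : ℕ) {l : ℝ} (hl : 0 < l) :
    HasDerivAt (fun x => (√x)⁻¹ ^ n) (-(n / 2) * (√l)⁻¹ ^ (n + 2)) l := by
  have hs : √l ≠ 0 := (sqrt_pos.mpr hl).ne'
  refine (((hasDerivAt_sqrt hl.ne').inv hs).pow n).congr_deriv ?_
  rcases n with _ | n
  · simp
  · simp only [Pi.inv_apply, Nat.add_sub_cancel, inv_pow]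
    field_simp
    ring

theorem hasDerivAt_sqrt_mul (u : ℝ) {l : ℝ} (hl : 0 < l) :
    HasDerivAt (fun x => √x * u) (u / 2 * (√l)⁻¹) l := by
  refine ((hasDerivAt_sqrt hl.ne').mul_const u).congr_deriv ?_
  field_simp

theorem hasDerivAt_sin_sqrt_mul_inv_sqrt_pow (u : ℝ) (n : ℕ) {l : ℝ} (hl : 0 < l) :
    HasDerivAt (fun x => sin (√x * u) * (√x)⁻¹ ^ n)
      (u / 2 * (cos (√l * u) * (√l)⁻¹ ^ (n + 1)) - n / 2 * (sin (√l * u) * (√l)⁻¹ ^ (n + 2)))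
      l :=
  (((hasDerivAt_sqrt_mul u hl).sin).mul (hasDerivAt_inv_sqrt_pow n hl)).congr_deriv (by ring)

theorem hasDerivAt_cos_sqrt_mul_inv_sqrt_pow (u : ℝ) (n : ℕ) {l : ℝ} (hl : 0 < l) :
    HasDerivAt (fun x => cos (√x * u) * (√x)⁻¹ ^ n)
      (-(u / 2) * (sin (√l * u) * (√l)⁻¹ ^ (n + 1)) - n / 2 * (cos (√l * u) * (√l)⁻¹ ^ (n + 2)))
      l :=
  (((hasDerivAt_sqrt_mul u hl).cos).mul (hasDerivAt_inv_sqrt_pow n hl)).congr_deriv (by ring)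

theorem hasDerivAt_sineKernelDeriv (u : ℝ) {m : ℕ} (hm : m < 3) {l : ℝ} (hl : 0 < l) :
    HasDerivAt (sineKernelDeriv m u) (sineKernelDeriv (m + 1) u l) l := by
  have hsin (n : ℕ) := hasDerivAt_sin_sqrt_mul_inv_sqrt_pow u n hl
  have hcos (n : ℕ) := hasDerivAt_cos_sqrt_mul_inv_sqrt_pow u n hl
  show HasDerivAt (fun x => sineKernelDeriv m u x) (sineKernelDeriv (m + 1) u l) l
  interval_cases m <;> simp only [sineKernelDeriv]
  · have h1 := hsin 1
    simp only [pow_one] at h1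
    exact h1.congr_deriv (by push_cast; ring)
  · exact (((hcos 2).const_mul (u / 2)).sub ((hsin 3).const_mul (1 / 2))).congr_deriv
      (by push_cast; ring)
  · exact ((((hsin 3).const_mul (-(u ^ 2 / 4))).sub ((hcos 4).const_mul (3 * u / 4))).add
      ((hsin 5).const_mul (3 / 4))).congr_deriv (by push_cast; ring)

end SineKernel

section SineKernelBounds

theorem abs_sineKernelDeriv_le (u : ℝ) {l : ℝ} (hl : 1 / 4 ≤ l) {m : ℕ} (hm : m ≤ 3) :
    |sineKernelDeriv m u l| ≤ 16 * (1 + |u|) ^ 3 * (√l)⁻¹ ^ (m + 1) := by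
  obtain ⟨r, hr_def⟩ : ∃ r, r = (√l)⁻¹ := ⟨_, rfl⟩
  have hr : 0 ≤ r := hr_def ▸ inv_nonneg.mpr (sqrt_nonneg l)
  have hstep (n : ℕ) : r ^ (n + 1) ≤ 2 * r ^ n := by
    rw [pow_succ, mul_comm]; gcongr; exact hr_def ▸ inv_sqrt_le_two hl
  have hq (a n : ℕ) : 0 ≤ |u| ^ a * r ^ n := by positivity
  have hs := abs_sin_le_one (√l * u)
  have hc := abs_cos_le_one (√l * u)
  interval_cases m <;> simp only [sineKernelDeriv, Nat.reduceAdd, ← hr_def]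
  · calc |sin (√l * u) * r| ≤ 1 * r ^ 1 := by
          simpa using abs_mul_mul_pow_le (c := 1) (le_of_eq abs_one) hs hr 1
      _ ≤ _ := by nlinarith [pow_nonneg hr 1, hq 1 1, hq 2 1, hq 3 1]
  · calc _ ≤ |u| / 2 * r ^ 2 + 1 / 2 * r ^ 3 :=
          (abs_sub _ _).trans (add_le_add (abs_mul_mul_pow_le (by simp [abs_div]) hc hr 2)
            (abs_mul_mul_pow_le (by norm_num) hs hr 3))
      _ ≤ _ := by
          have h3 : r ^ 3 ≤ 2 * r ^ 2 := hstep 2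
          nlinarith [hq 1 2, hq 2 2, hq 3 2]
  · calc _ ≤ |u| ^ 2 / 4 * r ^ 3 + 3 * |u| / 4 * r ^ 4 + 3 / 4 * r ^ 5 :=
          (abs_add_le _ _).trans (add_le_add ((abs_sub _ _).trans (add_le_add
            (abs_mul_mul_pow_le (by simp [abs_div]) hs hr 3)
            (abs_mul_mul_pow_le (by simp [abs_div, abs_mul]) hc hr 4)))
            (abs_mul_mul_pow_le (by norm_num) hs hr 5))
      _ ≤ _ := by
          have h4 : r ^ 4 ≤ 2 * r ^ 3 := hstep 3
          have h5 : r ^ 5 ≤ 2 * r ^ 4 := hstep 4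
          nlinarith [mul_le_mul_of_nonneg_left h4 (abs_nonneg u), pow_nonneg hr 3, hq 1 3, hq 2 3,
            hq 3 3]
  · calc _ ≤ |u| ^ 3 / 8 * r ^ 4 + 3 * |u| ^ 2 / 4 * r ^ 5 + 15 * |u| / 8 * r ^ 6
          + 15 / 8 * r ^ 7 :=
          (abs_sub _ _).trans (add_le_add ((abs_add_le _ _).trans (add_le_add
            ((abs_add_le _ _).trans (add_le_add
              (abs_mul_mul_pow_le (by simp [abs_div]) hc hr 4)
              (abs_mul_mul_pow_le (by simp [abs_div, abs_mul]) hs hr 5)))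
            (abs_mul_mul_pow_le (by simp [abs_div, abs_mul]) hc hr 6)))
            (abs_mul_mul_pow_le (by norm_num) hs hr 7))
      _ ≤ _ := by
          have h5 : r ^ 5 ≤ 2 * r ^ 4 := hstep 4
          have h6 : r ^ 6 ≤ 2 * r ^ 5 := hstep 5
          have h7 : r ^ 7 ≤ 2 * r ^ 6 := hstep 6
          nlinarith [mul_le_mul_of_nonneg_left h5 (pow_nonneg (abs_nonneg u) 2),
            mul_le_mul_of_nonneg_left h6 (abs_nonneg u),
            mul_le_mul_of_nonneg_left h5 (abs_nonneg u),
            pow_nonneg hr 4, hq 1 4, hq 2 4, hq 3 4]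

end SineKernelBounds

section LeadingTerms

theorem abs_sineKernelDeriv_two_add_le (u : ℝ) {l : ℝ} (hl : 1 ≤ l) :
    |sineKernelDeriv 2 u l + u ^ 2 * sin (√l * u) / (4 * l ^ ((3 : ℝ) / 2))| ≤
      2 * (1 + |u|) ^ 2 * (√l)⁻¹ ^ 4 := by
  have hr : 0 ≤ (√l)⁻¹ := inv_nonneg.mpr (sqrt_nonneg l)
  have hr1 : (√l)⁻¹ ≤ 1 := inv_le_one_of_one_le₀ (one_le_sqrt.mpr hl)
  have hlead : u ^ 2 * sin (√l * u) / (4 * l ^ ((3 : ℝ) / 2)) =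
      u ^ 2 / 4 * (sin (√l * u) * (√l)⁻¹ ^ 3) := by
    rw [rpow_div_two_eq_sqrt _ (by linarith), show ((3 : ℝ)) = ((3 : ℕ) : ℝ) by norm_num,
      rpow_natCast, inv_pow]
    ring
  rw [hlead]
  simp only [sineKernelDeriv]
  calc _ = |-(3 * u / 4) * (cos (√l * u) * (√l)⁻¹ ^ 4) + 3 / 4 * (sin (√l * u) * (√l)⁻¹ ^ 5)| := by
        congr 1; ring
    _ ≤ 3 * |u| / 4 * (√l)⁻¹ ^ 4 + 3 / 4 * (√l)⁻¹ ^ 5 :=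
        (abs_add_le _ _).trans (add_le_add
          (abs_mul_mul_pow_le (by simp [abs_div, abs_mul]) (abs_cos_le_one _) hr 4)
          (abs_mul_mul_pow_le (by norm_num) (abs_sin_le_one _) hr 5))
    _ ≤ 2 * (1 + |u|) ^ 2 * (√l)⁻¹ ^ 4 := by
        have h5 : (√l)⁻¹ ^ 5 ≤ (√l)⁻¹ ^ 4 := pow_le_pow_of_le_one hr hr1 (by norm_num)
        nlinarith [abs_nonneg u, pow_nonneg hr 4, mul_nonneg (abs_nonneg u) (pow_nonneg hr 4),
          mul_nonneg (sq_nonneg |u|) (pow_nonneg hr 4)]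

theorem abs_sineKernelDeriv_three_add_le (u : ℝ) {l : ℝ} (hl : 1 ≤ l) :
    |sineKernelDeriv 3 u l + u ^ 3 * cos (√l * u) / (8 * l ^ 2)| ≤
      2 * (1 + |u|) ^ 2 * (√l)⁻¹ ^ 5 := by
  have hr : 0 ≤ (√l)⁻¹ := inv_nonneg.mpr (sqrt_nonneg l)
  have hr1 : (√l)⁻¹ ≤ 1 := inv_le_one_of_one_le₀ (one_le_sqrt.mpr hl)
  have hlead : u ^ 3 * cos (√l * u) / (8 * l ^ 2) = u ^ 3 / 8 * (cos (√l * u) * (√l)⁻¹ ^ 4) := by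
    rw [← sq_sqrt (show 0 ≤ l by linarith), inv_pow, sqrt_sq (sqrt_nonneg l)]
    ring
  rw [hlead]
  simp only [sineKernelDeriv]
  calc _ = |3 * u ^ 2 / 4 * (sin (√l * u) * (√l)⁻¹ ^ 5) + 15 * u / 8 * (cos (√l * u) * (√l)⁻¹ ^ 6)
        - 15 / 8 * (sin (√l * u) * (√l)⁻¹ ^ 7)| := by
        congr 1; ring
    _ ≤ 3 * |u| ^ 2 / 4 * (√l)⁻¹ ^ 5 + 15 * |u| / 8 * (√l)⁻¹ ^ 6 + 15 / 8 * (√l)⁻¹ ^ 7 :=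
        (abs_sub _ _).trans (add_le_add ((abs_add_le _ _).trans (add_le_add
          (abs_mul_mul_pow_le (by simp [abs_div, abs_mul]) (abs_sin_le_one _) hr 5)
          (abs_mul_mul_pow_le (by simp [abs_div, abs_mul]) (abs_cos_le_one _) hr 6)))
          (abs_mul_mul_pow_le (by norm_num) (abs_sin_le_one _) hr 7))
    _ ≤ 2 * (1 + |u|) ^ 2 * (√l)⁻¹ ^ 5 := by
        have h6 : (√l)⁻¹ ^ 6 ≤ (√l)⁻¹ ^ 5 := pow_le_pow_of_le_one hr hr1 (by norm_num)
        have h7 : (√l)⁻¹ ^ 7 ≤ (√l)⁻¹ ^ 5 := pow_le_pow_of_le_one hr hr1 (by norm_num)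
        nlinarith [abs_nonneg u, pow_nonneg hr 5, mul_nonneg (abs_nonneg u) (pow_nonneg hr 5),
          mul_nonneg (sq_nonneg |u|) (pow_nonneg hr 5)]

end LeadingTerms

section Integrand

theorem extSeq_mem_Icc {L : ℝ} (hL : 0 ≤ L) {k : ℕ} {t : Fin k → ℝ} (ht : t ∈ simplexSet L k)
    (i : Fin (k + 2)) : extSeq L t i ∈ Icc 0 L := by
  induction i using Fin.lastCases with
  | last => simpa [extSeq] using hL
  | cast j =>
    rw [extSeq, Fin.snoc_castSucc]
    induction j using Fin.cases with
    | zero => simpa using hL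
    | succ j => simpa using ht.2 j

theorem continuous_extSeq (L : ℝ) {k : ℕ} (i : Fin (k + 2)) :
    Continuous fun t : Fin k → ℝ => extSeq L t i :=
  (continuous_apply i).comp <| Continuous.finSnoc
    (continuous_const.finCons continuous_id : Continuous fun t => (Fin.cons 0 t : Fin (k + 1) → ℝ))
    continuous_const

/-- The integrand of `Sfun L W k` as a function of `λ`, with `λ ^ (-(k+1)/2)` distributed over the
`k + 1` sine factors. -/
noncomputable def simplexIntegrand (L : ℝ) (W : ℝ → ℝ) {k : ℕ} (t : Fin k → ℝ) (l : ℝ) : ℝ :=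
  (∏ j : Fin k, W (t j)) *
    ∏ j : Fin (k + 1), sineKernelDeriv 0 (extSeq L t j.succ - extSeq L t j.castSucc) l

theorem Sfun_eq_setIntegral_simplexIntegrand (L : ℝ) (W : ℝ → ℝ) (k : ℕ) {l : ℝ} (hl : 0 ≤ l) :
    Sfun L W k l = ∫ t in simplexSet L k, simplexIntegrand L W t l := by
  refine integral_congr_ae (Eventually.of_forall fun t => ?_)
  have hpow : l ^ (-((k : ℝ) + 1) / 2) = (√l)⁻¹ ^ (k + 1) := by
    rw [← rpow_neg_div_two_eq_inv_sqrt_pow hl, Nat.cast_succ]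
  simp only [simplexIntegrand, sineKernelDeriv, Finset.prod_mul_distrib, Finset.prod_const,
    Finset.card_univ, Fintype.card_fin, hpow]
  ring

theorem contDiffOn_sineKernelDeriv_zero (u : ℝ) {n : ℕ∞ω} :
    ContDiffOn ℝ n (sineKernelDeriv 0 u) (Ioi 0) :=
  fun _ hl => (((contDiffAt_sqrt (ne_of_gt hl)).mul contDiffAt_const).sin.mul
    ((contDiffAt_sqrt (ne_of_gt hl)).inv (sqrt_pos.mpr hl).ne')).contDiffWithinAt

theorem contDiffOn_simplexIntegrand (L : ℝ) (W : ℝ → ℝ) {k : ℕ} (t : Fin k → ℝ) {n : ℕ∞ω} :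
    ContDiffOn ℝ n (simplexIntegrand L W t) (Ioi 0) :=
  contDiffOn_const.mul (contDiffOn_prod fun _ _ => contDiffOn_sineKernelDeriv_zero _)

theorem iteratedDeriv_sineKernelDeriv_zero (u : ℝ) {m : ℕ} (hm : m ≤ 3) {l : ℝ} (hl : 0 < l) :
    iteratedDeriv m (sineKernelDeriv 0 u) l = sineKernelDeriv m u l := by
  rw [iteratedDeriv_eq_iterate]
  exact eqOn_iterate_deriv_of_hasDerivAt isOpen_Ioi (fun _ _ => rfl)
    (fun _ hm _ hx => hasDerivAt_sineKernelDeriv u hm hx) m hm hl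

theorem abs_iteratedDeriv_simplexIntegrand_le {L : ℝ} (hL : 0 ≤ L) {W : ℝ → ℝ} {M : ℝ}
    (hM : ∀ x ∈ Icc 0 L, |W x| ≤ M) {k : ℕ} {t : Fin k → ℝ} (ht : t ∈ simplexSet L k) {m : ℕ}
    (hm : m ≤ 3) {l : ℝ} (hl : 1 / 4 ≤ l) :
    |iteratedDeriv m (simplexIntegrand L W t) l| ≤
      M ^ k * ((16 * (1 + L) ^ 3 * (√l)⁻¹) ^ (k + 1) * ((k + 1) * (√l)⁻¹) ^ m) := by
  have hl0 : l ∈ Ioi (0 : ℝ) := show 0 < l by linarith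
  have hW : |∏ j : Fin k, W (t j)| ≤ M ^ k := by
    rw [Finset.abs_prod]
    calc ∏ j, |W (t j)| ≤ ∏ _j : Fin k, M :=
          Finset.prod_le_prod (fun j _ => abs_nonneg _) fun j _ => hM (t j) (ht.2 j)
      _ = M ^ k := by simp
  have hfactor : ∀ j ∈ (Finset.univ : Finset (Fin (k + 1))), ∀ i ≤ 3,
      ‖iteratedFDerivWithin ℝ i (sineKernelDeriv 0 (extSeq L t j.succ - extSeq L t j.castSucc))
        (Ioi 0) l‖ ≤ 16 * (1 + L) ^ 3 * (√l)⁻¹ ^ (i + 1) := fun j _ i hi => by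
    rw [norm_iteratedFDerivWithin_eq_norm_iteratedDeriv_of_isOpen isOpen_Ioi hl0,
      iteratedDeriv_sineKernelDeriv_zero _ hi hl0, Real.norm_eq_abs]
    refine (abs_sineKernelDeriv_le _ hl hi).trans ?_
    gcongr
    exact (Real.dist_le_of_mem_Icc (extSeq_mem_Icc hL ht _) (extSeq_mem_Icc hL ht _)).trans_eq
      (sub_zero L)
  have hprod := norm_iteratedFDerivWithin_prod_le_of_le isOpen_Ioi.uniqueDiffOn hl0
    (fun _ _ => contDiffOn_sineKernelDeriv_zero _) hfactor hm
  rw [norm_iteratedFDerivWithin_eq_norm_iteratedDeriv_of_isOpen isOpen_Ioi hl0] at hprod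
  simp only [Finset.card_univ, Fintype.card_fin, Nat.cast_add, Nat.cast_one,
    Real.norm_eq_abs] at hprod
  unfold simplexIntegrand
  rw [iteratedDeriv_const_mul_field, abs_mul]
  exact mul_le_mul hW hprod (abs_nonneg _) ((abs_nonneg _).trans hW)

end Integrand

section SfunDeriv

noncomputable def SfunDeriv (L : ℝ) (W : ℝ → ℝ) (m k : ℕ) (l : ℝ) : ℝ :=
  ∫ t in simplexSet L k, iteratedDeriv m (simplexIntegrand L W t) l

variable {L : ℝ} {W : ℝ → ℝ}

theorem aestronglyMeasurable_iteratedDeriv_simplexIntegrand (hW : ContinuousOn W (Icc 0 L))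
    (k m : ℕ) {l : ℝ} (hl : 0 < l) :
    AEStronglyMeasurable (fun t => iteratedDeriv m (simplexIntegrand L W t) l)
      (volume.restrict (simplexSet L k)) := by
  induction m generalizing l with
  | zero =>
    refine ContinuousOn.aestronglyMeasurable ?_ (measurableSet_simplexSet L k)
    simp only [iteratedDeriv_zero, simplexIntegrand, sineKernelDeriv]
    exact (continuousOn_finsetProd _ fun j _ =>
      hW.comp (continuous_apply j).continuousOn fun t ht => ht.2 j).mul
      (continuous_finsetProd _ fun j _ => (continuous_sin.comp (continuous_const.mul
        ((continuous_extSeq L _).sub (continuous_extSeq L _)))).mul continuous_const).continuousOn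
  | succ m ih =>
    simp only [iteratedDeriv_succ]
    exact aestronglyMeasurable_deriv_apply isOpen_Ioi hl (fun _ hy => ih hy)
      (ae_of_all _ fun t => ((contDiffOn_simplexIntegrand L W t).hasDerivAt_iteratedDeriv
        isOpen_Ioi m hl).differentiableAt)

variable (hL : 0 ≤ L) {M : ℝ} (hM : ∀ x ∈ Icc 0 L, |W x| ≤ M)
include hL hM

theorem abs_SfunDeriv_le (k : ℕ) {m : ℕ} (hm : m ≤ 3) {l : ℝ} (hl : 1 / 4 ≤ l) :
    |SfunDeriv L W m k l| ≤ L ^ k / k ! *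
      (M ^ k * ((16 * (1 + L) ^ 3 * (√l)⁻¹) ^ (k + 1) * ((k + 1) * (√l)⁻¹) ^ m)) := by
  have hM0 : 0 ≤ M := (abs_nonneg _).trans (hM 0 ⟨le_rfl, hL⟩)
  refine (norm_setIntegral_le_of_norm_le_const (volume_simplexSet_lt_top L k)
    (f := fun t => iteratedDeriv m (simplexIntegrand L W t) l) fun t ht =>
    abs_iteratedDeriv_simplexIntegrand_le hL hM ht hm hl).trans ?_
  rw [mul_comm]
  exact mul_le_mul_of_nonneg_right (volume_real_simplexSet_le hL k) (by positivity)

theorem hasDerivAt_SfunDeriv (hW : ContinuousOn W (Icc 0 L)) (k : ℕ) {m : ℕ} (hm : m < 3)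
    {l : ℝ} (hl : 1 / 4 < l) : HasDerivAt (SfunDeriv L W m k) (SfunDeriv L W (m + 1) k l) l := by
  have hM0 : 0 ≤ M := (abs_nonneg _).trans (hM 0 ⟨le_rfl, hL⟩)
  have hl0 : 0 < l := by linarith
  have hmeas := aestronglyMeasurable_iteratedDeriv_simplexIntegrand hW k (l := l)
  have hbound {i : ℕ} (hi : i ≤ 3) : ∀ᵐ t ∂volume.restrict (simplexSet L k), ∀ x ∈ Ioi (1 / 4),
      ‖iteratedDeriv i (simplexIntegrand L W t) x‖ ≤
        M ^ k * ((16 * (1 + L) ^ 3 * 2) ^ (k + 1) * ((k + 1) * 2) ^ i) := by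
    refine ae_restrict_of_forall_mem (measurableSet_simplexSet L k) fun t ht x hx => ?_
    have hx2 := inv_sqrt_le_two (le_of_lt hx)
    refine (abs_iteratedDeriv_simplexIntegrand_le hL hM ht hi (le_of_lt hx)).trans ?_
    gcongr
  exact (hasDerivAt_integral_of_dominated_loc_of_deriv_le (Ioi_mem_nhds hl)
    (F := fun x t => iteratedDeriv m (simplexIntegrand L W t) x)
    (F' := fun x t => iteratedDeriv (m + 1) (simplexIntegrand L W t) x)
    (eventually_of_mem (Ioi_mem_nhds hl0) fun x hx =>
      aestronglyMeasurable_iteratedDeriv_simplexIntegrand hW k m hx)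
    (Integrable.of_bound (hmeas m hl0) _ ((hbound hm.le).mono fun _ ht => ht l hl))
    (hmeas (m + 1) hl0) (hbound hm) (integrable_const _)
    (ae_of_all _ fun t x hx => (contDiffOn_simplexIntegrand L W t).hasDerivAt_iteratedDeriv
      isOpen_Ioi m (show 0 < x by linarith [mem_Ioi.mp hx]))).2

end SfunDeriv

section Series

variable {L : ℝ} (hL : 0 ≤ L) {W : ℝ → ℝ} {M : ℝ} (hM : ∀ x ∈ Icc 0 L, |W x| ≤ M)
include hL hM

/-- The `1 / k!` from the volume of the simplex beats the geometric growth of the integrand. -/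
theorem exists_summable_abs_SfunDeriv_succ_le :
    ∃ c : ℕ → ℝ, Summable c ∧ (∀ k, 0 ≤ c k) ∧ ∀ (k m : ℕ) (l : ℝ), m ≤ 3 → 1 / 4 ≤ l →
      |SfunDeriv L W m (k + 1) l| ≤ c k * (√l)⁻¹ ^ (m + 2) := by
  have hM0 : 0 ≤ M := (abs_nonneg _).trans (hM 0 ⟨le_rfl, hL⟩)
  obtain ⟨A, hA0, hA⟩ : ∃ A, 0 ≤ A ∧ 16 * (1 + L) ^ 3 = A := ⟨_, by positivity, rfl⟩
  refine ⟨fun k => A * ((16 * A * L * M) ^ (k + 1) / (k + 1)!),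
    ((summable_nat_add_iff 1).mpr (summable_pow_div_factorial _)).mul_left A,
    fun k => by positivity, fun k m l hm hl => (abs_SfunDeriv_le hL hM (k + 1) hm hl).trans ?_⟩
  rw [hA]
  have hr : 0 ≤ (√l)⁻¹ := inv_nonneg.mpr (sqrt_nonneg l)
  calc L ^ (k + 1) / (k + 1)! * (M ^ (k + 1) * ((A * (√l)⁻¹) ^ (k + 1 + 1) *
        ((((k + 1 : ℕ) : ℝ) + 1) * (√l)⁻¹) ^ m))
      = (L * M) ^ (k + 1) / (k + 1)! * A ^ (k + 2) *
          (((k : ℝ) + 2) ^ m * (√l)⁻¹ ^ k) * (√l)⁻¹ ^ (m + 2) := by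
        rw [mul_pow _ (√l)⁻¹ m]
        push_cast
        ring
    _ ≤ (L * M) ^ (k + 1) / (k + 1)! * A ^ (k + 2) * 16 ^ (k + 1) * (√l)⁻¹ ^ (m + 2) := by
        gcongr
        exact add_two_pow_mul_pow_le hm hr (inv_sqrt_le_two hl)
    _ = A * ((16 * A * L * M) ^ (k + 1) / (k + 1)!) * (√l)⁻¹ ^ (m + 2) := by ring

theorem exists_abs_tsum_SfunDeriv_le :
    ∃ V, 0 ≤ V ∧ ∀ m ≤ 3, ∀ l, 1 / 4 ≤ l →
      |∑' k, SfunDeriv L W m (k + 1) l| ≤ V * (√l)⁻¹ ^ (m + 2) := by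
  obtain ⟨c, hc, hc0, hbound⟩ := exists_summable_abs_SfunDeriv_succ_le hL hM
  refine ⟨∑' k, c k, tsum_nonneg hc0, fun m hm l hl => ?_⟩
  rw [← tsum_mul_right]
  exact tsum_of_norm_bounded (f := fun k => SfunDeriv L W m (k + 1) l) (hc.mul_right _).hasSum
    fun k => hbound k m l hm hl

theorem hasDerivAt_tsum_SfunDeriv (hW : ContinuousOn W (Icc 0 L)) {m : ℕ} (hm : m < 3) {l : ℝ}
    (hl : 1 / 4 < l) :
    HasDerivAt (fun x => ∑' k, SfunDeriv L W m (k + 1) x) (∑' k, SfunDeriv L W (m + 1) (k + 1) l)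
      l := by
  obtain ⟨c, hc, hc0, hbound⟩ := exists_summable_abs_SfunDeriv_succ_le hL hM
  have hbound' {i : ℕ} (hi : i ≤ 3) (k : ℕ) {x : ℝ} (hx : 1 / 4 ≤ x) :
      ‖SfunDeriv L W i (k + 1) x‖ ≤ c k * 2 ^ 5 := by
    refine (hbound k i x hi hx).trans (mul_le_mul_of_nonneg_left ?_ (hc0 k))
    exact (pow_le_pow_left₀ (inv_nonneg.mpr (sqrt_nonneg x)) (inv_sqrt_le_two hx) _).trans
      (pow_le_pow_right₀ one_le_two (by omega))
  exact hasDerivAt_tsum_of_isPreconnected (hc.mul_right _) isOpen_Ioi isPreconnected_Ioi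
    (fun k x hx => hasDerivAt_SfunDeriv hL hM hW (k + 1) hm hx)
    (fun k x hx => hbound' hm k (le_of_lt hx)) hl
    (Summable.of_norm_bounded (hc.mul_right _) fun k => hbound' hm.le k hl.le) hl

end Series

section Main

noncomputable def sfunDeriv (L : ℝ) (W : ℝ → ℝ) (m : ℕ) (l : ℝ) : ℝ :=
  sineKernelDeriv m L l + ∑' k, SfunDeriv L W m (k + 1) l

theorem eqOn_sfun_sfunDeriv_zero (L : ℝ) (W : ℝ → ℝ) : EqOn (sfun L W) (sfunDeriv L W 0) (Ioi 0) :=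
  fun l hl => by
    simp only [sfun, sfunDeriv, sineKernelDeriv, SfunDeriv, iteratedDeriv_zero, div_eq_mul_inv,
      Sfun_eq_setIntegral_simplexIntegrand L W _ (le_of_lt hl)]

variable {L : ℝ} (hL : 0 ≤ L) {W : ℝ → ℝ} (hW : ContinuousOn W (Icc 0 L)) {M : ℝ}
  (hM : ∀ x ∈ Icc 0 L, |W x| ≤ M)
include hL hW hM

theorem hasDerivAt_sfunDeriv {m : ℕ} (hm : m < 3) {l : ℝ} (hl : 1 / 4 < l) :
    HasDerivAt (sfunDeriv L W m) (sfunDeriv L W (m + 1) l) l :=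
  (hasDerivAt_sineKernelDeriv L hm (by linarith)).add (hasDerivAt_tsum_SfunDeriv hL hM hW hm hl)

theorem eqOn_iterate_deriv_sfun {m : ℕ} (hm : m ≤ 3) :
    EqOn (deriv^[m] (sfun L W)) (sfunDeriv L W m) (Ioi (1 / 4)) :=
  eqOn_iterate_deriv_of_hasDerivAt isOpen_Ioi
    ((eqOn_sfun_sfunDeriv_zero L W).mono (Ioi_subset_Ioi (by norm_num)))
    (fun _ hm _ hx => hasDerivAt_sfunDeriv hL hW hM hm hx) m hm

theorem differentiableAt_iterate_deriv_sfun {m : ℕ} (hm : m < 3) {l : ℝ} (hl : 1 / 4 < l) :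
    DifferentiableAt ℝ (deriv^[m] (sfun L W)) l :=
  (hasDerivAt_iterate_deriv_of_hasDerivAt isOpen_Ioi
    ((eqOn_sfun_sfunDeriv_zero L W).mono (Ioi_subset_Ioi (by norm_num)))
    (fun _ hm _ hx => hasDerivAt_sfunDeriv hL hW hM hm hx) hm hl).differentiableAt

theorem exists_abs_iterate_deriv_sfun_sub_le :
    ∃ V, 0 ≤ V ∧ ∀ m ≤ 3, ∀ l, 1 ≤ l →
      |deriv^[m] (sfun L W) l - sineKernelDeriv m L l| ≤ V * (√l)⁻¹ ^ (m + 2) := by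
  obtain ⟨V, hV, htail⟩ := exists_abs_tsum_SfunDeriv_le hL hM
  refine ⟨V, hV, fun m hm l hl => ?_⟩
  rw [eqOn_iterate_deriv_sfun hL hW hM hm (show 1 / 4 < l by linarith), sfunDeriv,
    add_sub_cancel_left]
  exact htail m hm l (by linarith)

end Main

/-- `s` is three times differentiable on `(1,∞)`, with
`s''(λ) = −L² sin(√λ L)/(4λ^{3/2}) + O(λ^{−2})` and
`s'''(λ) = −L³ cos(√λ L)/(8λ²) + O(λ^{−5/2})`. -/
theorem sfun_higher_deriv_asymptotics (L : ℝ) (hL : 0 < L) (W : ℝ → ℝ)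
    (hW : ContinuousOn W (Icc 0 L)) (M : ℝ) (hM : ∀ x ∈ Icc (0:ℝ) L, |W x| ≤ M) :
    (∀ lam : ℝ, 1 < lam →
      DifferentiableAt ℝ (sfun L W) lam ∧
      DifferentiableAt ℝ (deriv (sfun L W)) lam ∧
      DifferentiableAt ℝ (deriv (deriv (sfun L W))) lam) ∧
    ∃ C : ℝ, 0 < C ∧ ∀ lam : ℝ, 1 ≤ lam →
      |deriv (deriv (sfun L W)) lam + L^2 * Real.sin (Real.sqrt lam * L) / (4 * lam ^ ((3:ℝ)/2))|
        ≤ C * lam ^ (-(2:ℝ)) ∧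
      |deriv (deriv (deriv (sfun L W))) lam + L^3 * Real.cos (Real.sqrt lam * L) / (8 * lam^2)|
        ≤ C * lam ^ (-(5:ℝ)/2) := by
  obtain ⟨V, hV, hrem⟩ := exists_abs_iterate_deriv_sfun_sub_le hL.le hW hM
  have hdiff {m : ℕ} (hm : m < 3) {lam : ℝ} (hlam : 1 < lam) :=
    differentiableAt_iterate_deriv_sfun hL.le hW hM hm (show 1 / 4 < lam by linarith)
  refine ⟨fun lam hlam => ⟨hdiff (m := 0) (by norm_num) hlam, hdiff (m := 1) (by norm_num) hlam,
    hdiff (m := 2) (by norm_num) hlam⟩, 2 * (1 + L) ^ 2 + V, by positivity, fun lam hlam => ?_⟩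
  have hlead2 := abs_sineKernelDeriv_two_add_le L hlam
  have hlead3 := abs_sineKernelDeriv_three_add_le L hlam
  rw [abs_of_pos hL] at hlead2 hlead3
  rw [show -(2 : ℝ) = -((4 : ℕ) : ℝ) / 2 by norm_num, show -(5 : ℝ) / 2 = -((5 : ℕ) : ℝ) / 2 by
    norm_num, rpow_neg_div_two_eq_inv_sqrt_pow (by linarith),
    rpow_neg_div_two_eq_inv_sqrt_pow (by linarith), add_comm _ V, add_mul, add_mul]
  have hsplit {x g y a b : ℝ} (h1 : |x - g| ≤ a) (h2 : |g + y| ≤ b) : |x + y| ≤ a + b :=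
    calc |x + y| = |(x - g) + (g + y)| := by congr 1; ring
      _ ≤ a + b := (abs_add_le _ _).trans (add_le_add h1 h2)
  exact ⟨hsplit (hrem 2 (by norm_num) lam hlam) hlead2,
    hsplit (hrem 3 (by norm_num) lam hlam) hlead3⟩
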